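/- Let X be a J-tangent vector field and let k ≥ 2. The following are equivalent: (a) every iterated Lie bracket of the vector fields X and JX with at least 2 and at most k factors vanishes at 0; (b) for every m ≤ k − 2 and every choice X₁, …, X_m ∈ {X, JX}, one has (X₁·⋯·X_m·[X, JX])(0) = 0 (for m = 0 this means [X, JX](0) = 0). -/

import Mathlib

open Complex Filter Asymptotics Metric Topology

noncomputable section

/-- `ℝ^{2n}` identified with `ℂ^n`. -/
abbrev E (n : ℕ) : Type := EuclideanSpace ℂ (Fin n)

/-- `∇_X Y` : the directional derivative of the vector field `Y` in the direction `X`,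
with respect to the standard flat connection of `ℝ^{2n}`. -/
def nabla {n : ℕ} (X Y : E n → E n) : E n → E n := fun p => fderiv ℝ Y p (X p)

/-- Lie bracket of vector fields. -/
def lie {n : ℕ} (X Y : E n → E n) : E n → E n := fun p => nabla X Y p - nabla Y X p

/-- The vector field `J X`. -/
def JVF {n : ℕ} (J : E n → (E n →L[ℝ] E n)) (X : E n → E n) : E n → E n := fun p => J p (X p)

/-- The Levi form `L_φ(X) = dφ(J[X, JX])`. -/
def Levi {n : ℕ} (J : E n → (E n →L[ℝ] E n)) (φ : E n → ℝ) (X : E n → E n) : E n → ℝ :=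
  fun p => fderiv ℝ φ p (J p (lie X (JVF J X) p))

/-- `v ∈ T^J_p M`, i.e. `dφ_p v = 0` and `dφ_p (J p v) = 0`. -/
def InTJ {n : ℕ} (J : E n → (E n →L[ℝ] E n)) (φ : E n → ℝ) (p v : E n) : Prop :=
  fderiv ℝ φ p v = 0 ∧ fderiv ℝ φ p (J p v) = 0

/-- A smooth vector field which is `J`-tangent to `M = φ⁻¹(0)`. -/
def JTangent {n : ℕ} (J : E n → (E n →L[ℝ] E n)) (φ : E n → ℝ) (X : E n → E n) : Prop :=
  ContDiff ℝ (⊤ : ℕ∞) X ∧ ∀ p, φ p = 0 → InTJ J φ p (X p)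

/-- A germ of `J`-holomorphic disk: `u` is smooth on the ball of radius `ε > 0` around `0`
and satisfies the Cauchy–Riemann equation `∂u/∂y = J(u) ∂u/∂x` there. -/
def IsJDisk {n : ℕ} (J : E n → (E n →L[ℝ] E n)) (u : ℂ → E n) (ε : ℝ) : Prop :=
  0 < ε ∧ ContDiffOn ℝ (⊤ : ℕ∞) u (ball (0 : ℂ) ε) ∧
    ∀ z ∈ ball (0 : ℂ) ε, fderiv ℝ u z Complex.I = J (u z) (fderiv ℝ u z 1)

/-- `∂f/∂x`. -/
def dx {F : Type*} [NormedAddCommGroup F] [NormedSpace ℝ F] (f : ℂ → F) : ℂ → F :=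
  fun z => fderiv ℝ f z 1

/-- `∂f/∂y`. -/
def dy {F : Type*} [NormedAddCommGroup F] [NormedSpace ℝ F] (f : ℂ → F) : ℂ → F :=
  fun z => fderiv ℝ f z Complex.I

/-- Laplacian `Δ f = ∂²f/∂x² + ∂²f/∂y²`. -/
def lap {F : Type*} [NormedAddCommGroup F] [NormedSpace ℝ F] (f : ℂ → F) : ℂ → F :=
  fun z => dx (dx f) z + dy (dy f) z

/-- `(p,q)`-th mixed derivative `∂^{p+q} f / ∂x^p ∂y^q`. -/
def mixD {F : Type*} [NormedAddCommGroup F] [NormedSpace ℝ F] (p q : ℕ) (f : ℂ → F) : ℂ → F :=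
  dx^[p] (dy^[q] f)

/-- `D^{p,q}_X X = (JX)·⋯·(JX)·X·⋯·X·X` (`q` factors `JX` followed by `p` factors `X`,
applied to `X`). -/
def Dpq {n : ℕ} (J : E n → (E n →L[ℝ] E n)) (X : E n → E n) (p q : ℕ) : E n → E n :=
  (nabla (JVF J X))^[q] ((nabla X)^[p] X)

/-- `X^m = ∇_X(⋯(∇_X X))` with `m` factors (`X^1 = X`). -/
def Xpow {n : ℕ} (X : E n → E n) (m : ℕ) : E n → E n := (nabla X)^[m - 1] X

/-- Iterated Lie brackets with `m` factors taken from the set `S` of vector fields. -/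
inductive IterBrk {n : ℕ} (S : Set (E n → E n)) : ℕ → (E n → E n) → Prop
  | base (W : E n → E n) (hW : W ∈ S) : IterBrk S 1 W
  | brk {m₁ m₂ : ℕ} {W₁ W₂ : E n → E n} (h₁ : IterBrk S m₁ W₁) (h₂ : IterBrk S m₂ W₂) :
      IterBrk S (m₁ + m₂) (lie W₁ W₂)

/-- Right-associated iterated product `X₁·X₂·⋯·X_m` of a list of vector fields. -/
def prodVF {n : ℕ} : List (E n → E n) → (E n → E n)
  | [] => fun _ => 0
  | [X] => X
  | X :: Y :: rest => nabla X (prodVF (Y :: rest))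

end

/-!
Proof idea: write `FlatAt S x r W` for "every derivative `Y₁·⋯·Y_j·W` with `j ≤ r` and
`Yᵢ ∈ S` vanishes at `x`". Since the flat connection is torsion free and has no curvature,
`∇_{Y₁} ∇_W Y = ∇_W ∇_{Y₁} Y + ∇_{[Y₁, W]} Y`, and induction on `r` shows that `∇_W Y` is
`r`-flat whenever `W` is. Then `Y·W = [Y, W] + W·Y` turns derivatives of brackets into brackets
with one more factor plus flat terms, and `[W₁, W₂] = W₁·W₂ − W₂·W₁` turns brackets back into
derivatives: a bracket with `m` factors is `(k − m)`-flat as soon as `[X, JX]` is `(k − 2)`-flat.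
-/

open scoped ContDiff

section VectorFields

variable {n : ℕ}

theorem nabla_apply (Y W : E n → E n) (p : E n) : nabla Y W p = fderiv ℝ W p (Y p) := rfl

theorem ContDiff.nabla {Y W : E n → E n} (hY : ContDiff ℝ ∞ Y) (hW : ContDiff ℝ ∞ W) :
    ContDiff ℝ ∞ (nabla Y W) :=
  (hW.fderiv_right le_rfl).clm_apply hY

theorem lie_eq_nabla_sub_nabla (Y W : E n → E n) : lie Y W = nabla Y W - nabla W Y := rfl

theorem ContDiff.lie {Y W : E n → E n} (hY : ContDiff ℝ ∞ Y) (hW : ContDiff ℝ ∞ W) :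
    ContDiff ℝ ∞ (lie Y W) :=
  (hY.nabla hW).sub (hW.nabla hY)

theorem nabla_add {Y F G : E n → E n} (hF : Differentiable ℝ F) (hG : Differentiable ℝ G) :
    nabla Y (F + G) = nabla Y F + nabla Y G :=
  funext fun p => by simp only [nabla, fderiv_add (hF p) (hG p), add_apply, Pi.add_apply]

theorem nabla_neg (Y F : E n → E n) : nabla Y (-F) = -nabla Y F :=
  funext fun p => by simp only [nabla, fderiv_neg, neg_apply, Pi.neg_apply]

theorem nabla_zero (Y : E n → E n) : nabla Y 0 = 0 :=
  funext fun p => by simp [nabla]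

theorem nabla_nabla_sub_nabla_nabla {Y₁ W Y : E n → E n} (hY₁ : Differentiable ℝ Y₁)
    (hW : Differentiable ℝ W) (hY : ContDiff ℝ 2 Y) :
    nabla Y₁ (nabla W Y) - nabla W (nabla Y₁ Y) = nabla (lie Y₁ W) Y := by
  funext p
  have hdY : Differentiable ℝ (fderiv ℝ Y) :=
    (hY.fderiv_right (m := 1) le_rfl).differentiable one_ne_zero
  have hsymm : IsSymmSndFDerivAt ℝ Y p :=
    hY.contDiffAt.isSymmSndFDerivAt (by simp [minSmoothness_of_isRCLikeNormedField])
  have hWY : nabla Y₁ (nabla W Y) p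
      = fderiv ℝ Y p (fderiv ℝ W p (Y₁ p)) + fderiv ℝ (fderiv ℝ Y) p (Y₁ p) (W p) := by
    change fderiv ℝ (fun q => fderiv ℝ Y q (W q)) p (Y₁ p) = _
    simp [fderiv_clm_apply (hdY p) (hW p)]
  have hY₁Y : nabla W (nabla Y₁ Y) p
      = fderiv ℝ Y p (fderiv ℝ Y₁ p (W p)) + fderiv ℝ (fderiv ℝ Y) p (W p) (Y₁ p) := by
    change fderiv ℝ (fun q => fderiv ℝ Y q (Y₁ q)) p (W p) = _
    simp [fderiv_clm_apply (hdY p) (hY₁ p)]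
  rw [Pi.sub_apply, hWY, hY₁Y, hsymm (Y₁ p) (W p)]
  simp only [nabla, lie, map_sub]
  abel

end VectorFields

section FlatAt

variable {n : ℕ} {S : Set (E n → E n)} {x : E n}

def FlatAt (S : Set (E n → E n)) (x : E n) : ℕ → (E n → E n) → Prop
  | 0, W => W x = 0
  | r + 1, W => W x = 0 ∧ ∀ Y ∈ S, FlatAt S x r (nabla Y W)

theorem flatAt_zero_iff {W : E n → E n} : FlatAt S x 0 W ↔ W x = 0 := Iff.rfl

theorem flatAt_succ_iff {r : ℕ} {W : E n → E n} :
    FlatAt S x (r + 1) W ↔ W x = 0 ∧ ∀ Y ∈ S, FlatAt S x r (nabla Y W) := Iff.rfl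

theorem FlatAt.apply_eq_zero {r : ℕ} {W : E n → E n} (hW : FlatAt S x r W) : W x = 0 := by
  cases r with
  | zero => exact hW
  | succ r => exact hW.1

theorem FlatAt.mono {r r' : ℕ} {W : E n → E n} (hW : FlatAt S x r W) (h : r' ≤ r) :
    FlatAt S x r' W := by
  induction r' generalizing r W with
  | zero => exact hW.apply_eq_zero
  | succ r' ih =>
    obtain ⟨r, rfl⟩ : ∃ r₀, r = r₀ + 1 := ⟨r - 1, by omega⟩
    exact ⟨hW.1, fun Y hY => ih (hW.2 Y hY) (by omega)⟩

theorem flatAt_zero (r : ℕ) : FlatAt S x r 0 := by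
  induction r with
  | zero => rfl
  | succ r ih => exact ⟨rfl, fun Y _ => (nabla_zero Y).symm ▸ ih⟩

theorem FlatAt.neg {r : ℕ} {W : E n → E n} (hW : FlatAt S x r W) : FlatAt S x r (-W) := by
  induction r generalizing W with
  | zero => exact neg_eq_zero.mpr hW
  | succ r ih => exact ⟨neg_eq_zero.mpr hW.1, fun Y hY => (nabla_neg Y W).symm ▸ ih (hW.2 Y hY)⟩

variable (hS : ∀ Y ∈ S, ContDiff ℝ ∞ Y)
include hS

theorem FlatAt.add {r : ℕ} {F G : E n → E n} (hFs : ContDiff ℝ ∞ F) (hGs : ContDiff ℝ ∞ G)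
    (hF : FlatAt S x r F) (hG : FlatAt S x r G) : FlatAt S x r (F + G) := by
  induction r generalizing F G with
  | zero => exact (congrArg₂ (· + ·) hF hG).trans (add_zero 0)
  | succ r ih =>
    refine ⟨(congrArg₂ (· + ·) hF.1 hG.1).trans (add_zero 0), fun Y hY => ?_⟩
    rw [nabla_add (hFs.differentiable (by simp)) (hGs.differentiable (by simp))]
    exact ih ((hS Y hY).nabla hFs) ((hS Y hY).nabla hGs) (hF.2 Y hY) (hG.2 Y hY)

theorem FlatAt.sub {r : ℕ} {F G : E n → E n} (hFs : ContDiff ℝ ∞ F) (hGs : ContDiff ℝ ∞ G)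
    (hF : FlatAt S x r F) (hG : FlatAt S x r G) : FlatAt S x r (F - G) :=
  sub_eq_add_neg F G ▸ hF.add hS hFs hGs.neg hG.neg

theorem FlatAt.nabla_left {r : ℕ} {W Y : E n → E n} (hWs : ContDiff ℝ ∞ W)
    (hYs : ContDiff ℝ ∞ Y) (hW : FlatAt S x r W) : FlatAt S x r (nabla W Y) := by
  induction r generalizing W Y with
  | zero => rw [flatAt_zero_iff, nabla_apply, hW.apply_eq_zero, map_zero]
  | succ r ih =>
    refine flatAt_succ_iff.2 ⟨by rw [nabla_apply, hW.apply_eq_zero, map_zero], fun Y₁ hY₁ => ?_⟩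
    have hY₁s := hS Y₁ hY₁
    have hlie : FlatAt S x r (lie Y₁ W) :=
      (hW.2 Y₁ hY₁).sub hS (hY₁s.nabla hWs) (hWs.nabla hY₁s) (ih hWs hY₁s (hW.mono r.le_succ))
    rw [← sub_add_cancel (nabla Y₁ (nabla W Y)) (nabla W (nabla Y₁ Y)),
      nabla_nabla_sub_nabla_nabla (hY₁s.differentiable (by simp)) (hWs.differentiable (by simp))
        (hYs.of_le ENat.LEInfty.out)]
    exact (ih (hY₁s.lie hWs) hYs hlie).add hS ((hY₁s.lie hWs).nabla hYs)
      (hWs.nabla (hY₁s.nabla hYs)) (ih hWs (hY₁s.nabla hYs) (hW.mono r.le_succ))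

end FlatAt

section Words

variable {n : ℕ}

theorem prodVF_cons_of_ne_nil (Y : E n → E n) {l : List (E n → E n)} (hl : l ≠ []) :
    prodVF (Y :: l) = nabla Y (prodVF l) := by
  obtain ⟨Z, l, rfl⟩ := List.exists_cons_of_ne_nil hl
  rfl

theorem prodVF_append_pair (l : List (E n → E n)) (Y W : E n → E n) :
    prodVF (l ++ [Y, W]) = prodVF (l ++ [nabla Y W]) := by
  induction l with
  | nil => rfl
  | cons Z l ih =>
    rw [List.cons_append, List.cons_append, prodVF_cons_of_ne_nil Z (by simp),
      prodVF_cons_of_ne_nil Z (by simp), ih]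

theorem flatAt_iff_forall_prodVF {S : Set (E n → E n)} {x : E n} {r : ℕ} {W : E n → E n} :
    FlatAt S x r W ↔
      ∀ l : List (E n → E n), l.length ≤ r → (∀ Y ∈ l, Y ∈ S) → prodVF (l ++ [W]) x = 0 := by
  induction r generalizing W with
  | zero =>
    refine ⟨fun hW l hl _ => ?_, fun h => h [] le_rfl (by simp)⟩
    rw [List.eq_nil_of_length_eq_zero (Nat.le_zero.mp hl)]
    exact hW
  | succ r ih =>
    simp only [flatAt_succ_iff, ih]
    refine ⟨fun ⟨hW, h⟩ l hl hlS => ?_, fun h => ⟨h [] (by simp) (by simp), fun Y hY l hl hlS => ?_⟩⟩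
    · rcases List.eq_nil_or_concat' l with rfl | ⟨l, Y, rfl⟩
      · exact hW
      · simp only [List.mem_append, List.mem_singleton] at hlS
        rw [List.append_assoc, List.singleton_append, prodVF_append_pair]
        exact h Y (hlS Y (Or.inr rfl)) l (by simpa using hl) fun Z hZ => hlS Z (Or.inl hZ)
    · rw [← prodVF_append_pair, ← List.singleton_append, ← List.append_assoc]
      exact h _ (by simpa using hl) (by simpa [or_imp, forall_and] using ⟨hlS, hY⟩)

end Words

section IterBrk

variable {n : ℕ} {S : Set (E n → E n)}

theorem IterBrk.one_le {m : ℕ} {W : E n → E n} (h : IterBrk S m W) : 1 ≤ m := by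
  induction h <;> omega

theorem IterBrk.mem_of_one {W : E n → E n} (h : IterBrk S 1 W) : W ∈ S := by
  generalize hm : 1 = m at h
  induction h with
  | base W hW => exact hW
  | brk h₁ h₂ => have := h₁.one_le; have := h₂.one_le; omega

theorem IterBrk.contDiff (hS : ∀ Y ∈ S, ContDiff ℝ ∞ Y) {m : ℕ} {W : E n → E n}
    (h : IterBrk S m W) : ContDiff ℝ ∞ W := by
  induction h with
  | base W hW => exact hS W hW
  | brk _ _ ih₁ ih₂ => exact ih₁.lie ih₂

variable {x : E n} (hS : ∀ Y ∈ S, ContDiff ℝ ∞ Y)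
include hS

theorem IterBrk.flatAt_of_forall_apply_eq_zero {k : ℕ}
    (hbrk : ∀ m W, 2 ≤ m → m ≤ k → IterBrk S m W → W x = 0) (s : ℕ) {m : ℕ} {W : E n → E n}
    (h : IterBrk S m W) (hm : 2 ≤ m) (hmk : m + s ≤ k) : FlatAt S x s W := by
  induction s generalizing m W with
  | zero => exact hbrk m W hm hmk h
  | succ s ih =>
    refine flatAt_succ_iff.2 ⟨hbrk m W hm (by omega) h, fun Y hY => ?_⟩
    have hWs := h.contDiff hS
    rw [← sub_add_cancel (nabla Y W) (nabla W Y), ← lie_eq_nabla_sub_nabla]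
    exact (ih (.brk (.base Y hY) h) (by omega) (by omega)).add hS ((hS Y hY).lie hWs)
      (hWs.nabla (hS Y hY)) ((ih h hm (by omega)).nabla_left hS hWs (hS Y hY))

theorem IterBrk.flatAt_nabla {k m₁ m₂ : ℕ} {W₁ W₂ : E n → E n} (h₁ : IterBrk S m₁ W₁)
    (h₂ : IterBrk S m₂ W₂) (hW₁ : 2 ≤ m₁ → FlatAt S x (k - m₁) W₁)
    (hW₂ : 2 ≤ m₂ → FlatAt S x (k - m₂) W₂) (hm : 3 ≤ m₁ + m₂) (hmk : m₁ + m₂ ≤ k) :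
    FlatAt S x (k - (m₁ + m₂)) (nabla W₁ W₂) := by
  rcases Nat.lt_or_ge m₁ 2 with hm₁ | hm₁
  · obtain rfl : m₁ = 1 := by have := h₁.one_le; omega
    have hW₂ := hW₂ (by omega)
    rw [show k - m₂ = k - (1 + m₂) + 1 by omega] at hW₂
    exact hW₂.2 W₁ h₁.mem_of_one
  · exact ((hW₁ hm₁).mono (by omega)).nabla_left hS (h₁.contDiff hS) (h₂.contDiff hS)

theorem IterBrk.flatAt {k : ℕ} (hgen : ∀ Y₁ ∈ S, ∀ Y₂ ∈ S, FlatAt S x (k - 2) (lie Y₁ Y₂))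
    {m : ℕ} {W : E n → E n} (h : IterBrk S m W) (hm : 2 ≤ m) (hmk : m ≤ k) :
    FlatAt S x (k - m) W := by
  induction h with
  | base => omega
  | @brk m₁ m₂ W₁ W₂ h₁ h₂ ih₁ ih₂ =>
    have := h₁.one_le
    have := h₂.one_le
    by_cases hm₁₂ : m₁ = 1 ∧ m₂ = 1
    · obtain ⟨rfl, rfl⟩ := hm₁₂
      exact hgen W₁ h₁.mem_of_one W₂ h₂.mem_of_one
    have ih₁' := fun hm₁ => ih₁ hm₁ (by omega)
    have ih₂' := fun hm₂ => ih₂ hm₂ (by omega)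
    rw [lie_eq_nabla_sub_nabla]
    refine .sub hS ((h₁.contDiff hS).nabla (h₂.contDiff hS))
      ((h₂.contDiff hS).nabla (h₁.contDiff hS)) (h₁.flatAt_nabla hS h₂ ih₁' ih₂' (by omega) hmk) ?_
    rw [add_comm m₁]
    exact h₂.flatAt_nabla hS h₁ ih₂' ih₁' (by omega) (by omega)

end IterBrk

theorem flatAt_lie_of_mem_pair {n : ℕ} {A B : E n → E n} {x : E n} {r : ℕ}
    (hAB : FlatAt {A, B} x r (lie A B)) :
    ∀ Y₁ ∈ ({A, B} : Set (E n → E n)), ∀ Y₂ ∈ ({A, B} : Set (E n → E n)),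
      FlatAt {A, B} x r (lie Y₁ Y₂) := by
  have hself : ∀ Y : E n → E n, lie Y Y = 0 := fun Y => funext fun _ => sub_self _
  rintro Y₁ hY₁ Y₂ hY₂
  rcases hY₁ with h₁ | h₁ <;> rcases hY₂ with h₂ | h₂ <;> rw [h₁, h₂]
  · exact hself A ▸ flatAt_zero r
  · exact hAB
  · rw [show lie B A = -lie A B from funext fun _ => (neg_sub _ _).symm]
    exact hAB.neg
  · exact hself B ▸ flatAt_zero r

theorem brackets_vanish_iff_derivatives_of_bracket_general {n : ℕ}
    (J : E n → (E n →L[ℝ] E n)) (φ : E n → ℝ)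
    (hJsmooth : ContDiff ℝ (⊤ : ℕ∞) J)
    (X : E n → E n) (hX : JTangent J φ X) (k : ℕ) (hk : 2 ≤ k) :
    (∀ (m : ℕ) (W : E n → E n), 2 ≤ m → m ≤ k →
        IterBrk {X, JVF J X} m W → W 0 = 0) ↔
    (∀ l : List (E n → E n), l.length ≤ k - 2 → (∀ W ∈ l, W = X ∨ W = JVF J X) →
        prodVF (l ++ [lie X (JVF J X)]) 0 = 0) := by
  have hS : ∀ Y ∈ ({X, JVF J X} : Set (E n → E n)), ContDiff ℝ ∞ Y := by
    rintro Y (rfl | rfl)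
    exacts [hX.1, hJsmooth.clm_apply hX.1]
  have hmem : ∀ l : List (E n → E n),
      (∀ W ∈ l, W = X ∨ W = JVF J X) ↔ ∀ W ∈ l, W ∈ ({X, JVF J X} : Set (E n → E n)) := by
    simp
  constructor
  · intro hbrk l hl hlS
    have hXJX : IterBrk {X, JVF J X} 2 (lie X (JVF J X)) :=
      .brk (.base X (by simp)) (.base (JVF J X) (by simp))
    exact flatAt_iff_forall_prodVF.1 (hXJX.flatAt_of_forall_apply_eq_zero hS hbrk (k - 2)
      le_rfl (by omega)) l hl ((hmem l).1 hlS)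
  · intro hder m W hm hmk hW
    have hXJX : FlatAt {X, JVF J X} 0 (k - 2) (lie X (JVF J X)) :=
      flatAt_iff_forall_prodVF.2 fun l hl hlS => hder l hl ((hmem l).2 hlS)
    exact (hW.flatAt hS (flatAt_lie_of_mem_pair hXJX) hm hmk).apply_eq_zero

/-- all iterated Lie brackets of `X` and `JX` with `2, …, k` factors vanish
at `0` iff all derivatives `X₁·⋯·X_m·[X, JX]` with `m ≤ k − 2` and `X_i ∈ {X, JX}` vanish
at `0`. -/
theorem brackets_vanish_iff_derivatives_of_bracket {n : ℕ}
    (J : E n → (E n →L[ℝ] E n)) (φ : E n → ℝ)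
    (hJsmooth : ContDiff ℝ (⊤ : ℕ∞) J) (hJ2 : ∀ x v, J x (J x v) = -v)
    (hJ0 : ∀ v : E n, J 0 v = Complex.I • v)
    (hφsmooth : ContDiff ℝ (⊤ : ℕ∞) φ) (hφ0 : φ 0 = 0)
    (hreg : ∀ x, φ x = 0 → fderiv ℝ φ x ≠ 0)
    (X : E n → E n) (hX : JTangent J φ X) (k : ℕ) (hk : 2 ≤ k) :
    (∀ (m : ℕ) (W : E n → E n), 2 ≤ m → m ≤ k →
        IterBrk {X, JVF J X} m W → W 0 = 0) ↔
    (∀ l : List (E n → E n), l.length ≤ k - 2 → (∀ W ∈ l, W = X ∨ W = JVF J X) →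
        prodVF (l ++ [lie X (JVF J X)]) 0 = 0) :=
  brackets_vanish_iff_derivatives_of_bracket_general J φ hJsmooth X hX k hk
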